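/- arXiv:1612.07289 — 2 statements merged into one kernel-verified Lean document; each statement's English description precedes it below -/
import Mathlib

section
/- Let X be a random variable on a probability space with X > 0 almost surely, let N ≥ 2 be a natural number, let s' > 0, and set c = (N!)^{-1/N}. Then the partial sum ∑_{n=0}^{N-1} (1/n!) E[(s'X)^n e^{-s'X}] is strictly less than ∑_{n=1}^{N} (-1)^{n-1} (N choose n) E[e^{-n c s' X}]. (This is the paper's Proposition 1: the left-hand side equals ∑_{n=0}^{N-1} ((-s)^n/n!) d^n/ds^n L_X(s) evaluated at s = s', where L_X(s) = E[e^{-sX}] is the Laplace transform of X.) -/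
open MeasureTheory ProbabilityTheory Real

open Filter Set Topology
open scoped Nat

/-!
With `x = s' X`, the binomial theorem turns the right-hand side into
`E[1 - (1 - e^{-c x})^N]`, so it suffices to prove, for every `x > 0`,
`e^{-x} ∑_{n<N} xⁿ/n! < 1 - (1 - e^{-c x})^N`, i.e. that the Erlang distribution function
dominates `(1 - e^{-c x})^N`. Their difference `D` vanishes at `0` and at `∞`, and `D' = f - g`
with `f` the Erlang density. Since `c^N N! = 1`, `log (f / g) = (N - 1) φ(c x) - (1 - c) x`
with `φ(u) = log (u / (1 - e^{-u}))` strictly concave, and it is positive near `0` because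
`c > 2 / (N + 1)` (from `N! < ((N + 1) / 2)^N`). A strictly concave function that is positive
near `0` changes sign at most once, from `+` to `-`; so `D` increases and then decreases, and is
therefore positive.
-/

lemma StrictConcaveOn.neg_of_nonpos_of_lt {H : ℝ → ℝ} (hH : StrictConcaveOn ℝ (Ioi 0) H)
    (hpos : ∀ᶠ x in 𝓝[>] 0, 0 < H x) {y z : ℝ} (hy : 0 < y) (hHy : H y ≤ 0) (hyz : y < z) :
    H z < 0 := by
  obtain ⟨x, hHx, hx0, hxy⟩ := (hpos.and (Ioo_mem_nhdsGT hy)).exists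
  have hxz := hxy.trans hyz
  have hmin := hH.lt_on_openSegment hx0 (hy.trans hyz) hxz.ne
    (by rw [openSegment_eq_Ioo hxz]; exact ⟨hxy, hyz⟩)
  rcases min_lt_iff.1 (hmin.trans_le hHy) with h | h
  · linarith
  · exact h

lemma pos_of_hasDerivAt_of_sign_change {D D' : ℝ → ℝ} (hD : ∀ x, HasDerivAt D (D' x) x)
    (h0 : D 0 = 0) (htop : Tendsto D atTop (𝓝 0)) (hD' : ∀ y z, 0 < y → y < z → D' y ≤ 0 → D' z < 0)
    {x : ℝ} (hx : 0 < x) : 0 < D x := by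
  have hcont : Continuous D := continuous_iff_continuousAt.2 fun x => (hD x).continuousAt
  by_cases hdec : ∃ y ∈ Ioo 0 x, D' y ≤ 0
  · obtain ⟨y, hy, hD'y⟩ := hdec
    have hanti : StrictAntiOn D (Ici x) :=
      strictAntiOn_of_deriv_neg (convex_Ici x) hcont.continuousOn fun z hz => by
        rw [interior_Ici] at hz
        rw [(hD z).deriv]
        exact hD' y z hy.1 (hy.2.trans hz) hD'y
    have hx1 : x + 1 ∈ Ici x := mem_Ici.2 (by linarith)
    have hlim : 0 ≤ D (x + 1) := le_of_tendsto htop <| eventually_atTop.2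
      ⟨x + 1, fun z hz => hanti.antitoneOn hx1 (mem_Ici.2 (by linarith)) hz⟩
    linarith [hanti (mem_Ici.2 le_rfl) hx1 (lt_add_one x)]
  · have hmono : StrictMonoOn D (Icc 0 x) :=
      strictMonoOn_of_deriv_pos (convex_Icc 0 x) hcont.continuousOn fun y hy => by
        rw [interior_Icc] at hy
        rw [(hD y).deriv]
        exact not_le.1 fun h => hdec ⟨y, hy, h⟩
    simpa [h0] using hmono (left_mem_Icc.2 hx.le) (right_mem_Icc.2 hx.le) hx

lemma two_pow_mul_factorial_lt_succ_pow {N : ℕ} (hN : 2 ≤ N) : 2 ^ N * N ! < (N + 1) ^ N := by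
  induction N, hN using Nat.le_induction with
  | base => decide
  | succ M hM ih =>
    -- Bernoulli's inequality
    have hB : 2 * (M + 1) ^ (M + 1) ≤ (M + 1 + 1) ^ (M + 1) := by
      have := pow_add_mul_le_add_pow (a := M + 1) (b := 1) (by positivity) (by positivity) (M + 1)
      rw [Nat.add_sub_cancel, Nat.cast_id] at this
      linarith [pow_succ (M + 1) M]
    calc 2 ^ (M + 1) * (M + 1)! = 2 * (M + 1) * (2 ^ M * M !) := by rw [Nat.factorial_succ]; ring
      _ < 2 * (M + 1) * (M + 1) ^ M := by gcongr
      _ = 2 * (M + 1) ^ (M + 1) := by ring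
      _ ≤ (M + 1 + 1) ^ (M + 1) := hB

lemma rpow_neg_inv_pow_mul_self {x : ℝ} (hx : 0 < x) {N : ℕ} (hN : N ≠ 0) :
    (x ^ (-(1 / N : ℝ))) ^ N * x = 1 := by
  rw [← rpow_natCast, ← rpow_mul hx.le, show -(1 / N : ℝ) * N = -1 by field_simp, rpow_neg_one,
    inv_mul_cancel₀ hx.ne']

lemma two_lt_succ_mul_of_pow_mul_factorial_eq_one {N : ℕ} (hN : 2 ≤ N) {c : ℝ} (hc0 : 0 ≤ c)
    (hc : c ^ N * N ! = 1) : 2 < (N + 1) * c := by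
  have hfac : (2 : ℝ) ^ N * N ! < (N + 1) ^ N := by
    exact_mod_cast two_pow_mul_factorial_lt_succ_pow hN
  have hcN : 0 < c ^ N := by
    rcases (pow_nonneg hc0 N).eq_or_lt with h | h
    · simp [← h] at hc
    · exact h
  have hpow : (2 : ℝ) ^ N < ((N + 1) * c) ^ N :=
    calc (2 : ℝ) ^ N = c ^ N * (2 ^ N * N !) := by linear_combination (-(2 : ℝ) ^ N) * hc
      _ < c ^ N * (N + 1) ^ N := by gcongr
      _ = ((N + 1) * c) ^ N := by rw [mul_pow]; ring
  exact lt_of_pow_lt_pow_left₀ N (by positivity) hpow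

lemma one_sub_exp_neg_le_two_mul_div_two_add {u : ℝ} (hu : 0 ≤ u) :
    1 - exp (-u) ≤ 2 * u / (2 + u) := by
  rcases lt_or_ge u 2 with hu2 | hu2
  · -- the artanh series gives `u ≤ log ((2 + u) / (2 - u))`
    have hs := hasSum_log_sub_log_of_abs_lt_one (x := u / 2)
      (by rw [abs_lt]; constructor <;> linarith)
    have h := le_hasSum hs 0 fun k _ => mul_nonneg (by positivity) (pow_nonneg (by linarith) _)
    norm_num at h
    have hexp : (1 - u / 2) / (1 + u / 2) ≤ exp (-u) := by
      rw [← exp_log (div_pos (by linarith) (by linarith) : (0:ℝ) < (1 - u / 2) / (1 + u / 2)),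
        log_div (by linarith) (by linarith)]
      exact exp_le_exp.2 (by linarith)
    rw [div_le_iff₀ (by positivity)] at hexp
    rw [le_div_iff₀ (by positivity)]
    linarith
  · have : 1 ≤ 2 * u / (2 + u) := by rw [le_div_iff₀ (by positivity)]; linarith
    linarith [exp_pos (-u)]

lemma div_two_add_le_log_sub_log_one_sub_exp_neg {u : ℝ} (hu : 0 < u) :
    u / (2 + u) ≤ log u - log (1 - exp (-u)) := by
  have hE : 0 < 1 - exp (-u) := by linarith [exp_lt_one_iff.2 (neg_neg_of_pos hu)]
  calc u / (2 + u) = 1 - (1 + u / 2)⁻¹ := by field_simp; ring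
    _ ≤ log (1 + u / 2) := one_sub_inv_le_log_of_pos (by positivity)
    _ ≤ log (u / (1 - exp (-u))) := by
      refine log_le_log (by positivity) ?_
      rw [le_div_iff₀ hE]
      have := one_sub_exp_neg_le_two_mul_div_two_add hu.le
      rw [le_div_iff₀ (by positivity)] at this
      linarith
    _ = log u - log (1 - exp (-u)) := log_div hu.ne' hE.ne'

lemma mul_exp_half_lt_exp_sub_one {u : ℝ} (hu : 0 < u) : u * exp (u / 2) < exp u - 1 := by
  have hsinh : u / 2 < sinh (u / 2) := self_lt_sinh_iff.2 (by positivity)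
  rw [sinh_eq] at hsinh
  have h1 : exp (u / 2) * exp (-(u / 2)) = 1 := by rw [← exp_add]; simp
  have h2 : exp (u / 2) * exp (u / 2) = exp u := by rw [← exp_add]; ring_nf
  nlinarith [exp_pos (u / 2)]

lemma strictAntiOn_inv_sub_inv_exp_sub_one :
    StrictAntiOn (fun u : ℝ => u⁻¹ - (exp u - 1)⁻¹) (Ioi 0) := by
  have hE : ∀ u : ℝ, 0 < u → 0 < exp u - 1 := fun u hu => by linarith [add_one_lt_exp hu.ne']
  have hderiv : ∀ u : ℝ, 0 < u → HasDerivAt (fun u : ℝ => u⁻¹ - (exp u - 1)⁻¹)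
      (-(u ^ 2)⁻¹ - -exp u / (exp u - 1) ^ 2) u := fun u hu =>
    (hasDerivAt_inv hu.ne').sub (((hasDerivAt_exp u).sub_const 1).inv (hE u hu).ne')
  refine strictAntiOn_of_deriv_neg (convex_Ioi 0)
    (fun u hu => (hderiv u hu).continuousAt.continuousWithinAt) fun u hu => ?_
  rw [interior_Ioi] at hu
  rw [(hderiv u hu).deriv]
  have hsq : u ^ 2 * exp u < (exp u - 1) ^ 2 := by
    have h := mul_exp_half_lt_exp_sub_one hu
    have h2 : exp (u / 2) ^ 2 = exp u := by rw [← exp_nat_mul]; ring_nf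
    nlinarith [mul_pos hu (exp_pos (u / 2))]
  have key : exp u / (exp u - 1) ^ 2 < (u ^ 2)⁻¹ := by
    rw [div_lt_iff₀ (pow_pos (hE u hu) 2), inv_mul_eq_div, lt_div_iff₀ (pow_pos hu 2)]
    linarith
  rw [neg_div]
  linarith

lemma hasDerivAt_log_sub_log_one_sub_exp_neg {u : ℝ} (hu : 0 < u) :
    HasDerivAt (fun u => log u - log (1 - exp (-u))) (u⁻¹ - (exp u - 1)⁻¹) u := by
  have hE : 0 < 1 - exp (-u) := by linarith [exp_lt_one_iff.2 (neg_neg_of_pos hu)]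
  refine ((hasDerivAt_log hu.ne').sub
    (((hasDerivAt_neg u).exp.const_sub 1).log hE.ne')).congr_deriv ?_
  rw [exp_neg]
  have : exp u - 1 ≠ 0 := by linarith [add_one_lt_exp hu.ne']
  field_simp

/-- `log (f / g)` for the Erlang density `f x = e^{-x} x^k / k!` and the density `g` of
`(1 - e^{-c x})^(k+1)`, simplified using `c^(k+1) (k+1)! = 1`. -/
noncomputable def logDensityRatio (k : ℕ) (c x : ℝ) : ℝ :=
  k * (log (c * x) - log (1 - exp (-(c * x)))) - (1 - c) * x

lemma hasDerivAt_logDensityRatio (k : ℕ) {c x : ℝ} (hc : 0 < c) (hx : 0 < x) :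
    HasDerivAt (logDensityRatio k c)
      (k * (((c * x)⁻¹ - (exp (c * x) - 1)⁻¹) * c) - (1 - c)) x := by
  have hcx : HasDerivAt (fun y => c * y) c x := by simpa using (hasDerivAt_id x).const_mul c
  exact (((hasDerivAt_log_sub_log_one_sub_exp_neg (mul_pos hc hx)).comp x hcx).const_mul
    (k : ℝ)).sub (by simpa using (hasDerivAt_id x).const_mul (1 - c))

lemma strictConcaveOn_logDensityRatio {k : ℕ} (hk : k ≠ 0) {c : ℝ} (hc : 0 < c) :
    StrictConcaveOn ℝ (Ioi 0) (logDensityRatio k c) := by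
  refine StrictAntiOn.strictConcaveOn_of_deriv (convex_Ioi 0)
    (fun x hx => (hasDerivAt_logDensityRatio k hc hx).continuousAt.continuousWithinAt) ?_
  rw [interior_Ioi]
  refine StrictAntiOn.congr (fun x hx y hy hxy => ?_)
    fun x hx => (hasDerivAt_logDensityRatio k hc hx).deriv.symm
  have h := strictAntiOn_inv_sub_inv_exp_sub_one (mul_pos hc hx) (mul_pos hc hy)
    (mul_lt_mul_of_pos_left hxy hc)
  have hk' : (0 : ℝ) < k := by positivity
  simp only at h ⊢
  gcongr

lemma eventually_pos_logDensityRatio {k : ℕ} {c : ℝ} (hc : 0 < c) (h : 2 < (k + 2) * c) :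
    ∀ᶠ x in 𝓝[>] 0, 0 < logDensityRatio k c x := by
  filter_upwards [Ioo_mem_nhdsGT (div_pos (sub_pos.2 h) hc)] with x ⟨hx, hxc⟩
  rw [lt_div_iff₀ hc] at hxc
  have hb := mul_le_mul_of_nonneg_left
    (div_two_add_le_log_sub_log_one_sub_exp_neg (mul_pos hc hx)) k.cast_nonneg
  have : (1 - c) * x < k * (c * x / (2 + c * x)) := by
    rw [mul_div_assoc', lt_div_iff₀ (by positivity)]
    nlinarith [mul_pos hc hx, mul_pos (mul_pos hc hx) hx]
  unfold logDensityRatio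
  linarith

lemma exp_neg_mul_pow_div_factorial_eq {k : ℕ} {c : ℝ} (hc0 : 0 < c)
    (hc : c ^ (k + 1) * (k + 1)! = 1) {x : ℝ} (hx : 0 < x) :
    exp (-x) * x ^ k / k ! = (k + 1) * c * exp (-(c * x)) * (1 - exp (-(c * x))) ^ k *
      exp (logDensityRatio k c x) := by
  have hE : 0 < 1 - exp (-(c * x)) := by
    linarith [exp_lt_one_iff.2 (neg_neg_of_pos (mul_pos hc0 hx))]
  have hsplit : exp (-(c * x)) = exp (-x) * exp ((1 - c) * x) := by rw [← exp_add]; ring_nf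
  rw [logDensityRatio, exp_sub, exp_nat_mul, exp_sub, exp_log (mul_pos hc0 hx), exp_log hE]
  generalize 1 - exp (-(c * x)) = E at hE ⊢
  rw [hsplit, div_pow]
  rw [Nat.factorial_succ] at hc
  push_cast at hc
  field_simp
  linear_combination (-x ^ k) * hc

lemma hasDerivAt_exp_neg_mul_sum_range (k : ℕ) (x : ℝ) :
    HasDerivAt (fun y => exp (-y) * ∑ n ∈ Finset.range (k + 1), y ^ n / n !)
      (-(exp (-x) * x ^ k / k !)) x := by
  induction k with
  | zero => simpa using (hasDerivAt_neg x).exp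
  | succ k ih =>
    simp_rw [Finset.sum_range_succ _ (k + 1), mul_add]
    refine (ih.add ((hasDerivAt_neg x).exp.mul
      ((hasDerivAt_pow (k + 1) x).div_const ((k + 1)! : ℝ)))).congr_deriv ?_
    rw [Nat.factorial_succ]
    push_cast
    field_simp
    ring

lemma hasDerivAt_one_sub_exp_neg_mul_pow (k : ℕ) (c x : ℝ) :
    HasDerivAt (fun y => (1 - exp (-(c * y))) ^ (k + 1))
      ((k + 1) * c * exp (-(c * x)) * (1 - exp (-(c * x))) ^ k) x := by
  have hcx : HasDerivAt (fun y => -(c * y)) (-c) x := by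
    simpa using (hasDerivAt_neg x).const_mul c
  refine ((hcx.exp.const_sub 1).pow (k + 1)).congr_deriv ?_
  push_cast
  ring

lemma tendsto_exp_neg_mul_sum_range (N : ℕ) :
    Tendsto (fun y => exp (-y) * ∑ n ∈ Finset.range N, y ^ n / n !) atTop (𝓝 0) := by
  simp_rw [Finset.mul_sum]
  simpa using tendsto_finsetSum _ fun n _ =>
    ((tendsto_pow_mul_exp_neg_atTop_nhds_zero n).div_const (n ! : ℝ)).congr fun y => by ring

theorem exp_neg_mul_sum_lt_one_sub_one_sub_exp_neg_pow {N : ℕ} (hN : 2 ≤ N) {c : ℝ}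
    (hc0 : 0 < c) (hc : c ^ N * N ! = 1) {x : ℝ} (hx : 0 < x) :
    exp (-x) * ∑ n ∈ Finset.range N, x ^ n / n ! < 1 - (1 - exp (-(c * x))) ^ N := by
  obtain ⟨k, rfl⟩ : ∃ k, N = k + 1 := ⟨N - 1, by omega⟩
  have hk : k ≠ 0 := by omega
  have hc2 : 2 < (k + 2) * c := by
    have := two_lt_succ_mul_of_pow_mul_factorial_eq_one hN hc0.le hc
    push_cast at this
    linarith
  set f : ℝ → ℝ := fun y => exp (-y) * y ^ k / (k ! : ℝ)
  set g : ℝ → ℝ := fun y => (k + 1) * c * exp (-(c * y)) * (1 - exp (-(c * y))) ^ k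
  have hg : ∀ y, 0 < y → 0 < g y := fun y hy => by
    have : 0 < 1 - exp (-(c * y)) := by
      linarith [exp_lt_one_iff.2 (neg_neg_of_pos (mul_pos hc0 hy))]
    positivity
  have hfg : ∀ y, 0 < y → f y = g y * exp (logDensityRatio k c y) := fun y hy =>
    exp_neg_mul_pow_div_factorial_eq hc0 (by exact_mod_cast hc) hy
  rw [← sub_pos, sub_right_comm]
  refine pos_of_hasDerivAt_of_sign_change
    (D := fun y => (1 - exp (-y) * ∑ n ∈ Finset.range (k + 1), y ^ n / n !) -
      (1 - exp (-(c * y))) ^ (k + 1))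
    (D' := fun y => f y - g y) (fun y => ?_) ?_ ?_ ?_ hx
  · exact (((hasDerivAt_exp_neg_mul_sum_range k y).const_sub 1).sub
      (hasDerivAt_one_sub_exp_neg_mul_pow k c y)).congr_deriv (by simp [f, g])
  · simp [Finset.sum_range_succ']
  · have hexp : Tendsto (fun y => exp (-(c * y))) atTop (𝓝 0) :=
      tendsto_exp_neg_atTop_nhds_zero.comp (tendsto_id.const_mul_atTop hc0)
    simpa using ((tendsto_exp_neg_mul_sum_range (k + 1)).const_sub 1).sub
      ((hexp.const_sub 1).pow (k + 1))
  · intro y z hy hyz hfgy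
    have hHy : logDensityRatio k c y ≤ 0 := by
      rw [← exp_le_one_iff, ← mul_le_iff_le_one_right (hg y hy), ← hfg y hy]
      exact sub_nonpos.1 hfgy
    have hHz := (strictConcaveOn_logDensityRatio hk hc0).neg_of_nonpos_of_lt
      (eventually_pos_logDensityRatio hc0 hc2) hy hHy hyz
    show f z - g z < 0
    rw [hfg z (hy.trans hyz), sub_neg]
    exact mul_lt_of_lt_one_right (hg z (hy.trans hyz)) (exp_lt_one_iff.2 hHz)

lemma sum_Icc_neg_one_pow_mul_choose_mul_pow {R : Type*} [CommRing R] (N : ℕ) (t : R) :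
    ∑ n ∈ Finset.Icc 1 N, (-1) ^ (n - 1) * (N.choose n : R) * t ^ n = 1 - (1 - t) ^ N := by
  have hrange : Finset.range (N + 1) = insert 0 (Finset.Icc 1 N) := by
    ext n
    simp only [Finset.mem_range, Finset.mem_insert, Finset.mem_Icc]
    omega
  have h := (Commute.all (-t) 1).add_pow N
  rw [hrange, Finset.sum_insert (by simp), neg_add_eq_sub] at h
  have hterm : ∀ n ∈ Finset.Icc 1 N,
      (-1) ^ (n - 1) * (N.choose n : R) * t ^ n = -((-t) ^ n * 1 ^ (N - n) * N.choose n) := by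
    intro n hn
    obtain ⟨m, rfl⟩ : ∃ m, n = m + 1 := ⟨n - 1, by simp at hn; omega⟩
    simp only [Nat.add_sub_cancel, neg_pow (t), one_pow, pow_succ]
    ring
  rw [Finset.sum_congr rfl hterm, Finset.sum_neg_distrib, h]
  simp

lemma pow_mul_exp_neg_le_factorial {x : ℝ} (hx : 0 ≤ x) (n : ℕ) : x ^ n * exp (-x) ≤ n ! := by
  have := pow_div_factorial_le_exp x hx n
  rw [div_le_iff₀ (by positivity)] at this
  rw [exp_neg, ← div_eq_mul_inv, div_le_iff₀ (exp_pos x)]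
  linarith

lemma integrable_pow_mul_exp_neg {Ω : Type*} [MeasurableSpace Ω] {μ : Measure Ω}
    [IsFiniteMeasure μ] {Y : Ω → ℝ} (hY : AEMeasurable Y μ) (hY0 : ∀ᵐ ω ∂μ, 0 ≤ Y ω) (n : ℕ) :
    Integrable (fun ω => Y ω ^ n * exp (-Y ω)) μ := by
  refine Integrable.of_bound ((hY.pow_const n).mul hY.neg.exp).aestronglyMeasurable (n ! : ℝ) ?_
  filter_upwards [hY0] with ω hω
  rw [norm_of_nonneg (by positivity)]
  exact pow_mul_exp_neg_le_factorial hω n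

lemma integral_lt_integral_of_ae_lt {α : Type*} [MeasurableSpace α] {μ : Measure α} [NeZero μ]
    {f g : α → ℝ} (hf : Integrable f μ) (hg : Integrable g μ) (hfg : ∀ᵐ x ∂μ, f x < g x) :
    ∫ x, f x ∂μ < ∫ x, g x ∂μ := by
  rw [← sub_pos, ← integral_sub hg hf, integral_pos_iff_support_of_nonneg_ae
    (hfg.mono fun x h => (sub_pos.2 h).le) (hg.sub hf), pos_iff_ne_zero]
  intro h0
  obtain ⟨x, hx, hx0⟩ := (hfg.and (measure_eq_zero_iff_ae_notMem.1 h0)).exists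
  exact hx0 (sub_ne_zero.2 hx.ne')

/-- **Proposition 1 (Alzer-type bound).** For a random variable `X > 0` a.s., `N ≥ 2` and
`s' > 0`, with `c = (N!)^(-1/N)`, the partial sum
`∑_{n=0}^{N-1} (1/n!) E[(s'X)^n e^{-s'X}]` is strictly less than
`∑_{n=1}^{N} (-1)^(n-1) (N choose n) E[e^{-n c s' X}]`. -/
theorem alzer_bound_laplace {Ω : Type*} [MeasureSpace Ω]
    [IsProbabilityMeasure (ℙ : Measure Ω)]
    (X : Ω → ℝ) (hX : Measurable X) (hXpos : ∀ᵐ ω ∂(ℙ : Measure Ω), 0 < X ω)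
    (N : ℕ) (hN : 2 ≤ N) (s' : ℝ) (hs' : 0 < s')
    (c : ℝ) (hc : c = (N.factorial : ℝ) ^ (-(1 / N : ℝ))) :
    ∑ n ∈ Finset.range N,
        (1 / n.factorial : ℝ) * ∫ ω, (s' * X ω) ^ n * Real.exp (-(s' * X ω)) <
      ∑ n ∈ Finset.Icc 1 N,
        (-1 : ℝ) ^ (n - 1) * (N.choose n : ℝ) *
          ∫ ω, Real.exp (-((n : ℝ) * c * s' * X ω)) := by
  have hc0 : 0 < c := hc ▸ rpow_pos_of_pos (by positivity) _
  have hcN : c ^ N * N ! = 1 := hc ▸ rpow_neg_inv_pow_mul_self (by positivity) (by omega)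
  have hint : ∀ (a : ℝ) (n : ℕ), 0 ≤ a →
      Integrable (fun ω => (a * X ω) ^ n * exp (-(a * X ω))) (ℙ : Measure Ω) := fun a n ha =>
    integrable_pow_mul_exp_neg (hX.const_mul a).aemeasurable
      (hXpos.mono fun ω hω => mul_nonneg ha hω.le) n
  have hint_exp : ∀ n : ℕ,
      Integrable (fun ω => exp (-((n : ℝ) * c * s' * X ω))) (ℙ : Measure Ω) := fun n => by
    simpa using hint (n * c * s') 0 (by positivity)
  simp_rw [← integral_const_mul]
  rw [← integral_finsetSum _ fun n _ => (hint s' n hs'.le).const_mul _,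
    ← integral_finsetSum _ fun n _ => (hint_exp n).const_mul _]
  refine integral_lt_integral_of_ae_lt
    (integrable_finsetSum _ fun n _ => (hint s' n hs'.le).const_mul _)
    (integrable_finsetSum _ fun n _ => (hint_exp n).const_mul _) ?_
  filter_upwards [hXpos] with ω hω
  have key := exp_neg_mul_sum_lt_one_sub_one_sub_exp_neg_pow hN hc0 hcN (mul_pos hs' hω)
  rw [← sum_Icc_neg_one_pow_mul_choose_mul_pow, Finset.mul_sum] at key
  convert key using 2
  · ring
  · rw [← exp_nat_mul]
    ring_nf
end

section
/- Let α > 2, θ > 0, λ > 0, ρ̃ > 0, ρ̂ > 0, R̃ > 0, a > 0, b > 0, and set s = θ ρ̃^{−1} R̃^α. Define the full-duplex worst-case spectral efficiency SE_FD^min(θ) = 2 (1 + s b ρ̂)^{−a} exp(−λ · 2 (ρ̃^{2/α} + ρ̂^{2/α}) π² s^{2/α} / (α sin(2π/α))) · log₂(1 + θ) and the half-duplex spectral efficiency SE_HD(θ) = exp(−λ · 2π² (θ R̃^α)^{2/α} / (α sin(2π/α))) · log₂(1 + θ). If λ ≤ (α sin(2π/α)) / (2π² (θ ρ̃^{−1}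 ρ̂ R̃^α)^{2/α}) · ln( 2 / (1 + b θ ρ̃^{−1} ρ̂ R̃^α)^a ), then SE_FD^min(θ) ≥ SE_HD(θ). -/
open MeasureTheory Real

/-- **Corollary 2 of the paper (N_R = 1).** If the density `λ` is below the given
threshold, the worst-case full-duplex spectral efficiency `SE_FD^min(θ)` is at least the
half-duplex spectral efficiency `SE_HD(θ)`. -/
theorem fd_beats_hd_density_condition
    (α θ lam ρt ρh Rt a b s : ℝ)
    (hα : 2 < α) (hθ : 0 < θ) (hlam : 0 < lam) (hρt : 0 < ρt) (hρh : 0 < ρh)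
    (hRt : 0 < Rt) (ha : 0 < a) (hb : 0 < b)
    (hs : s = θ * ρt⁻¹ * Rt ^ α)
    (SEFD SEHD : ℝ)
    (hFD : SEFD = 2 * (1 + s * b * ρh) ^ (-a) *
      Real.exp (-lam * (2 * (ρt ^ (2 / α) + ρh ^ (2 / α)) * π ^ 2 * s ^ (2 / α) /
        (α * Real.sin (2 * π / α)))) * Real.logb 2 (1 + θ))
    (hHD : SEHD = Real.exp (-lam * (2 * π ^ 2 * (θ * Rt ^ α) ^ (2 / α) /
      (α * Real.sin (2 * π / α)))) * Real.logb 2 (1 + θ))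
    (hcond : lam ≤ α * Real.sin (2 * π / α) /
        (2 * π ^ 2 * (θ * ρt⁻¹ * ρh * Rt ^ α) ^ (2 / α)) *
      Real.log (2 / (1 + b * θ * ρt⁻¹ * ρh * Rt ^ α) ^ a)) :
    SEHD ≤ SEFD := by
  have hπ : 0 < π := Real.pi_pos
  have hα0 : 0 < α := by linarith
  have hsin : 0 < Real.sin (2 * π / α) := by
    apply Real.sin_pos_of_pos_of_lt_pi
    · positivity
    · rw [div_lt_iff₀ hα0]; nlinarith
  have hC : 0 < α * Real.sin (2 * π / α) := by positivity
  have hRtα : 0 < Rt ^ α := Real.rpow_pos_of_pos hRt α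
  have hs0 : 0 < s := by rw [hs]; positivity
  have ht0 : 0 < s * b * ρh := by positivity
  have h1t : (0:ℝ) < 1 + s * b * ρh := by linarith
  have h1ta : 0 < (1 + s * b * ρh) ^ a := Real.rpow_pos_of_pos h1t a
  have hX : 0 < (s * ρh) ^ (2 / α) := Real.rpow_pos_of_pos (by positivity) _
  set C := α * Real.sin (2 * π / α) with hCdef
  -- rewrite the condition terms
  have hsρh : θ * ρt⁻¹ * ρh * Rt ^ α = s * ρh := by rw [hs]; ring
  have hbt : b * θ * ρt⁻¹ * ρh * Rt ^ α = s * b * ρh := by rw [hs]; ring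
  rw [hsρh, hbt] at hcond
  set K := 2 * π ^ 2 * (s * ρh) ^ (2 / α) / C with hKdef
  have hK0 : 0 < K := by rw [hKdef]; positivity
  have hlnK : lam * K ≤ Real.log (2 / (1 + s * b * ρh) ^ a) := by
    have := mul_le_mul_of_nonneg_right hcond hK0.le
    calc lam * K ≤ C / (2 * π ^ 2 * (s * ρh) ^ (2 / α)) *
        Real.log (2 / (1 + s * b * ρh) ^ a) * K := this
      _ = Real.log (2 / (1 + s * b * ρh) ^ a) := by
          rw [hKdef]; field_simp
  -- key factor inequality
  have hfac : 1 ≤ 2 * (1 + s * b * ρh) ^ (-a) * Real.exp (-(lam * K)) := by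
    have hexp : Real.exp (lam * K) ≤ 2 / (1 + s * b * ρh) ^ a := by
      calc Real.exp (lam * K) ≤ Real.exp (Real.log (2 / (1 + s * b * ρh) ^ a)) :=
            Real.exp_le_exp.mpr hlnK
        _ = 2 / (1 + s * b * ρh) ^ a := Real.exp_log (by positivity)
    have h2 : Real.exp (lam * K) * (1 + s * b * ρh) ^ a ≤ 2 := by
      rw [← le_div_iff₀ h1ta]; exact hexp
    rw [Real.rpow_neg h1t.le, Real.exp_neg, mul_assoc, ← mul_inv,
      le_mul_inv_iff₀ (by positivity), one_mul]
    nlinarith [h2]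
  -- exponent split
  have hsplit : -lam * (2 * (ρt ^ (2 / α) + ρh ^ (2 / α)) * π ^ 2 * s ^ (2 / α) / C)
      = -lam * (2 * π ^ 2 * (θ * Rt ^ α) ^ (2 / α) / C) + -(lam * K) := by
    have h3 : θ * Rt ^ α = s * ρt := by rw [hs]; field_simp
    rw [h3, Real.mul_rpow hs0.le hρt.le, hKdef, Real.mul_rpow hs0.le hρh.le]
    field_simp
    ring
  have hlogb : 0 < Real.logb 2 (1 + θ) :=
    Real.logb_pos (by norm_num) (by linarith)
  have hEA : 0 < Real.exp (-lam * (2 * π ^ 2 * (θ * Rt ^ α) ^ (2 / α) / C)) :=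
    Real.exp_pos _
  rw [hFD, hHD, hsplit, Real.exp_add]
  calc Real.exp (-lam * (2 * π ^ 2 * (θ * Rt ^ α) ^ (2 / α) / C)) * Real.logb 2 (1 + θ)
      = 1 * (Real.exp (-lam * (2 * π ^ 2 * (θ * Rt ^ α) ^ (2 / α) / C)) * Real.logb 2 (1 + θ)) := by ring
    _ ≤ (2 * (1 + s * b * ρh) ^ (-a) * Real.exp (-(lam * K))) *
        (Real.exp (-lam * (2 * π ^ 2 * (θ * Rt ^ α) ^ (2 / α) / C)) * Real.logb 2 (1 + θ)) := by
        apply mul_le_mul_of_nonneg_right hfac (by positivity)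
    _ = 2 * (1 + s * b * ρh) ^ (-a) *
        (Real.exp (-lam * (2 * π ^ 2 * (θ * Rt ^ α) ^ (2 / α) / C)) * Real.exp (-(lam * K))) *
        Real.logb 2 (1 + θ) := by ring
end
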